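/- arXiv:2507.04486 — 7 statements merged into one kernel-verified Lean document; each statement's English description precedes it below -/
import Mathlib

section
/- Let Φ be a tight twisting of a monoid S, i.e. Φ : S × S → ℕ satisfies (T1) Φ(a,b) + Φ(ab,c) = Φ(a,bc) + Φ(b,c), and (T2): for all a,b ∈ S there exist a',b' ∈ S with ab = a'b, Φ(a',b) = 0, ab = ab', and Φ(a,b') = 0. Then for all a,b,c ∈ S: if a ≤_L b (i.e. a ∈ S¹b) then Φ(a,c) ≥ Φ(b,c); consequently if a L b then Φ(a,c) = Φ(b,c). -/
theorem stmt1 {S : Type*} [Monoid S] (Φ : S → S → ℕ)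
    (hT1 : ∀ a b c : S, Φ a b + Φ (a * b) c = Φ a (b * c) + Φ b c)
    (hT2a : ∀ a b : S, ∃ a' : S, a * b = a' * b ∧ Φ a' b = 0)
    (hT2b : ∀ a b : S, ∃ b' : S, a * b = a * b' ∧ Φ a b' = 0) :
    ∀ a b c : S,
      ((∃ s : S, a = s * b) → Φ b c ≤ Φ a c) ∧
      (((∃ s : S, a = s * b) ∧ (∃ t : S, b = t * a)) → Φ a c = Φ b c) := by
  have key : ∀ a b c : S, (∃ s : S, a = s * b) → Φ b c ≤ Φ a c := by
    rintro a b c ⟨s, rfl⟩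
    obtain ⟨s', hs', h0⟩ := hT2a s b
    have := hT1 s' b c
    rw [h0, ← hs'] at this
    omega
  intro a b c
  exact ⟨key a b c, fun ⟨h1, h2⟩ => le_antisymm (key b a c h2) (key a b c h1)⟩
end

section
/- Let Φ be a tight twisting of a monoid S. Then for all a,b,c ∈ S there exist a',c' ∈ S such that abc = a'bc' and Φ(a',b) + Φ(a'b,c') = 0. -/
theorem stmt3 {S : Type*} [Monoid S] (Φ : S → S → ℕ)
    (hT1 : ∀ a b c : S, Φ a b + Φ (a * b) c = Φ a (b * c) + Φ b c)
    (hT2a : ∀ a b : S, ∃ a' : S, a * b = a' * b ∧ Φ a' b = 0)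
    (hT2b : ∀ a b : S, ∃ b' : S, a * b = a * b' ∧ Φ a b' = 0) :
    ∀ a b c : S, ∃ a' c' : S,
      a * b * c = a' * b * c' ∧ Φ a' b + Φ (a' * b) c' = 0 := by
  intro a b c
  obtain ⟨a', ha, ha0⟩ := hT2a a b
  obtain ⟨c', hc, hc0⟩ := hT2b (a' * b) c
  exact ⟨a', c', by rw [ha, hc], by rw [ha0, hc0]⟩
end

section
/- Let T = M ×_Φ^q S be a tight twisted product: S a monoid with tight twisting Φ, M a commutative monoid, q ∈ M, with multiplication (i,a)(j,b) = (i + j + Φ(a,b)q, ab). Then for i,j ∈ M and a,b ∈ S: (i,a) ≤_J (j,b) in T if and only if i ≤_J j in M and a ≤_J b in S. -/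
/-- The twisted product multiplication on `M × S`. -/
def tmul {M S : Type*} [AddCommMonoid M] [Monoid S] (Φ : S → S → ℕ) (q : M)
    (x y : M × S) : M × S :=
  (x.1 + y.1 + Φ x.2 y.2 • q, x.2 * y.2)

theorem stmt12 {M S : Type*} [AddCommMonoid M] [Monoid S] (Φ : S → S → ℕ)
    (hT1 : ∀ a b c : S, Φ a b + Φ (a * b) c = Φ a (b * c) + Φ b c)
    (hT2a : ∀ a b : S, ∃ a' : S, a * b = a' * b ∧ Φ a' b = 0)
    (hT2b : ∀ a b : S, ∃ b' : S, a * b = a * b' ∧ Φ a b' = 0)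
    (q : M) (i j : M) (a b : S) :
    (∃ u v : M × S, (i, a) = tmul Φ q (tmul Φ q u (j, b)) v) ↔
      ((∃ k l : M, i = k + j + l) ∧ (∃ s t : S, a = s * b * t)) := by
  constructor
  · rintro ⟨u, v, h⟩
    simp only [tmul, Prod.mk.injEq] at h
    obtain ⟨h1, h2⟩ := h
    refine ⟨⟨u.1, Φ u.2 b • q + v.1 + Φ (u.2 * b) v.2 • q, ?_⟩, ⟨u.2, v.2, h2⟩⟩
    rw [h1]; abel
  · rintro ⟨⟨k, l, hi⟩, ⟨s, t, ha⟩⟩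
    obtain ⟨s', hs1, hs2⟩ := hT2a s b
    obtain ⟨t', ht1, ht2⟩ := hT2b (s' * b) t
    refine ⟨(k, s'), (l, t'), ?_⟩
    simp only [tmul, hs2, ht2, zero_smul, add_zero, Prod.mk.injEq]
    exact ⟨hi, by rw [ha, hs1, ht1]⟩
end

section
/- Let T = M ×_Φ^q S be a tight twisted product. Then for i,j ∈ M and a,b ∈ S: (i,a) ≤_L (j,b) in T if and only if i ≤_J j in M and a ≤_L b in S; and (i,a) ≤_R (j,b) in T if and only if i ≤_J j in M and a ≤_R b in S. -/
theorem stmt13 {M S : Type*} [AddCommMonoid M] [Monoid S] (Φ : S → S → ℕ)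
    (hT1 : ∀ a b c : S, Φ a b + Φ (a * b) c = Φ a (b * c) + Φ b c)
    (hT2a : ∀ a b : S, ∃ a' : S, a * b = a' * b ∧ Φ a' b = 0)
    (hT2b : ∀ a b : S, ∃ b' : S, a * b = a * b' ∧ Φ a b' = 0)
    (q : M) (i j : M) (a b : S) :
    ((∃ u : M × S, (i, a) = tmul Φ q u (j, b)) ↔
      ((∃ k : M, i = k + j) ∧ (∃ s : S, a = s * b))) ∧
    ((∃ v : M × S, (i, a) = tmul Φ q (j, b) v) ↔
      ((∃ k : M, i = j + k) ∧ (∃ t : S, a = b * t))) := by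
  constructor
  · constructor
    · rintro ⟨u, hu⟩
      simp only [tmul, Prod.mk.injEq] at hu
      obtain ⟨h1, h2⟩ := hu
      exact ⟨⟨u.1 + Φ u.2 b • q, by rw [h1]; abel⟩, ⟨u.2, h2⟩⟩
    · rintro ⟨⟨k, hk⟩, ⟨s, hs⟩⟩
      obtain ⟨s', hs', hΦ⟩ := hT2a s b
      refine ⟨(k, s'), ?_⟩
      simp [tmul, hΦ, hk, hs, hs']
  · constructor
    · rintro ⟨v, hv⟩
      simp only [tmul, Prod.mk.injEq] at hv
      obtain ⟨h1, h2⟩ := hv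
      exact ⟨⟨v.1 + Φ b v.2 • q, by rw [h1]; abel⟩, ⟨v.2, h2⟩⟩
    · rintro ⟨⟨k, hk⟩, ⟨t, ht⟩⟩
      obtain ⟨t', ht', hΦ⟩ := hT2b b t
      refine ⟨(k, t'), ?_⟩
      simp [tmul, hΦ, hk, ht, ht']
end

section
/- A monoid N is stable if for all a,b ∈ N: (a J ab implies a R ab) and (a J ba implies a L ba). Let T = M ×_Φ^q S be a tight twisted product with M a commutative monoid. Then T is stable if and only if S is stable. -/
def GreenJle {α : Type*} (mul : α → α → α) (x y : α) : Prop :=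
  ∃ u v, x = mul (mul u y) v

def GreenRle {α : Type*} (mul : α → α → α) (x y : α) : Prop :=
  ∃ v, x = mul y v

def GreenLle {α : Type*} (mul : α → α → α) (x y : α) : Prop :=
  ∃ u, x = mul u y

def IsStable {α : Type*} (mul : α → α → α) : Prop :=
  ∀ x y : α,
    ((GreenJle mul x (mul x y) ∧ GreenJle mul (mul x y) x) →
      (GreenRle mul x (mul x y) ∧ GreenRle mul (mul x y) x)) ∧
    ((GreenJle mul x (mul y x) ∧ GreenJle mul (mul y x) x) →
      (GreenLle mul x (mul y x) ∧ GreenLle mul (mul y x) x))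

private lemma liftJ {M S : Type*} [AddCommMonoid M] [Monoid S] (Φ : S → S → ℕ)
    (hT2a : ∀ a b : S, ∃ a' : S, a * b = a' * b ∧ Φ a' b = 0)
    (hT2b : ∀ a b : S, ∃ b' : S, a * b = a * b' ∧ Φ a b' = 0)
    (q : M) {a c : S} (h : GreenJle (fun a b : S => a * b) a c) :
    GreenJle (tmul Φ q) ((0 : M), a) ((0 : M), c) := by
  obtain ⟨u, v, huv⟩ := h
  obtain ⟨u', hu', hΦu⟩ := hT2a u c
  obtain ⟨v', hv', hΦv⟩ := hT2b (u' * c) v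
  refine ⟨((0:M), u'), ((0:M), v'), ?_⟩
  have h2 : u' * c * v' = a := by rw [← hv', ← hu']; exact huv.symm
  simp only [tmul, hΦu, hΦv, zero_smul, add_zero, zero_add, h2]

private lemma projJ {M S : Type*} [AddCommMonoid M] [Monoid S] (Φ : S → S → ℕ)
    (q : M) {x y : M × S} (h : GreenJle (tmul Φ q) x y) :
    GreenJle (fun a b : S => a * b) x.2 y.2 := by
  obtain ⟨u, v, huv⟩ := h
  exact ⟨u.2, v.2, congrArg Prod.snd huv⟩

theorem stmt14 {M S : Type*} [AddCommMonoid M] [Monoid S] (Φ : S → S → ℕ)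
    (hT1 : ∀ a b c : S, Φ a b + Φ (a * b) c = Φ a (b * c) + Φ b c)
    (hT2a : ∀ a b : S, ∃ a' : S, a * b = a' * b ∧ Φ a' b = 0)
    (hT2b : ∀ a b : S, ∃ b' : S, a * b = a * b' ∧ Φ a b' = 0)
    (q : M) :
    IsStable (tmul Φ q) ↔ IsStable (fun a b : S => a * b) := by
  constructor
  · intro hT a b
    constructor
    · rintro ⟨hJ1, hJ2⟩
      obtain ⟨b', hb', hΦ⟩ := hT2b a b
      have hxy : tmul Φ q ((0:M), a) ((0:M), b') = ((0:M), a * b) := by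
        simp only [tmul, hΦ, zero_smul, add_zero, zero_add]
        rw [← hb']
      have key := (hT ((0:M), a) ((0:M), b')).1
      rw [hxy] at key
      obtain ⟨⟨z, hz⟩, -⟩ := key ⟨liftJ Φ hT2a hT2b q hJ1, liftJ Φ hT2a hT2b q hJ2⟩
      exact ⟨⟨z.2, congrArg Prod.snd hz⟩, ⟨b, rfl⟩⟩
    · rintro ⟨hJ1, hJ2⟩
      obtain ⟨b', hb', hΦ⟩ := hT2a b a
      have hyx : tmul Φ q ((0:M), b') ((0:M), a) = ((0:M), b * a) := by
        simp only [tmul, hΦ, zero_smul, add_zero, zero_add]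
        rw [← hb']
      have key := (hT ((0:M), a) ((0:M), b')).2
      rw [hyx] at key
      obtain ⟨⟨z, hz⟩, -⟩ := key ⟨liftJ Φ hT2a hT2b q hJ1, liftJ Φ hT2a hT2b q hJ2⟩
      exact ⟨⟨z.2, congrArg Prod.snd hz⟩, ⟨b, rfl⟩⟩
  · intro hS x y
    obtain ⟨m, a⟩ := x
    obtain ⟨n, b⟩ := y
    constructor
    · rintro ⟨hJ1, hJ2⟩
      -- project to S
      have hS1 := (hS a b).1 ⟨projJ Φ q hJ1, projJ Φ q hJ2⟩
      obtain ⟨⟨v₀, hv₀⟩, -⟩ := hS1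
      obtain ⟨v, hv, hΦv⟩ := hT2b (a * b) v₀
      -- extract first-coordinate equation from hJ1
      obtain ⟨⟨u₁, u⟩, ⟨v₁, w⟩, hEq⟩ := hJ1
      have h1 : m = u₁ + (m + n + Φ a b • q) + Φ u (a * b) • q + v₁ +
          Φ (u * (a * b)) w • q := congrArg Prod.fst hEq
      refine ⟨⟨⟨u₁ + Φ u (a * b) • q + v₁ + Φ (u * (a * b)) w • q, v⟩, ?_⟩, ⟨(n, b), rfl⟩⟩
      have h2 : (a * b) * v = a := by rw [← hv]; exact hv₀.symm
      simp only [tmul, hΦv, zero_smul, add_zero, h2]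
      refine Prod.ext ?_ rfl
      simp only
      conv_lhs => rw [h1]
      abel
    · rintro ⟨hJ1, hJ2⟩
      have hS1 := (hS a b).2 ⟨projJ Φ q hJ1, projJ Φ q hJ2⟩
      obtain ⟨⟨u₀, hu₀⟩, -⟩ := hS1
      obtain ⟨u, hu, hΦu⟩ := hT2a u₀ (b * a)
      obtain ⟨⟨u₁, p⟩, ⟨v₁, w⟩, hEq⟩ := hJ1
      have h1 : m = u₁ + (n + m + Φ b a • q) + Φ p (b * a) • q + v₁ +
          Φ (p * (b * a)) w • q := congrArg Prod.fst hEq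
      refine ⟨⟨⟨u₁ + Φ p (b * a) • q + v₁ + Φ (p * (b * a)) w • q, u⟩, ?_⟩, ⟨(n, b), rfl⟩⟩
      have h2 : u * (b * a) = a := by rw [← hu]; exact hu₀.symm
      simp only [tmul, hΦu, zero_smul, add_zero, h2]
      refine Prod.ext ?_ rfl
      simp only
      conv_lhs => rw [h1]
      abel
end

section
/- Let M be a commutative monoid, H a group H-class of M (equivalently, an H-class containing an idempotent), and k ∈ M. Then the following are equivalent: (1) H = H + k (as sets); (2) i ≤_J k for some i ∈ H; (3) i ≤_J k for all i ∈ H. -/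
theorem stmt15 {M : Type*} [AddCommMonoid M] (x : M) (H : Set M)
    (hH : H = {i : M | (∃ u : M, i = x + u) ∧ (∃ u : M, x = i + u)})
    (hgrp : ∃ e ∈ H, e + e = e) (k : M) :
    (((fun h => h + k) '' H = H) ↔ (∃ i ∈ H, ∃ u : M, i = k + u)) ∧
    (((fun h => h + k) '' H = H) ↔ (∀ i ∈ H, ∃ u : M, i = k + u)) := by
  obtain ⟨e, he, hee⟩ := hgrp
  subst hH
  obtain ⟨⟨a, ha⟩, ⟨b, hb⟩⟩ := he
  -- e is an identity on H
  have hid : ∀ i u : M, i = x + u → i + e = i := by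
    intro i u hu
    calc i + e = e + e + (b + u) := by rw [hu, hb]; abel
      _ = e + (b + u) := by rw [hee]
      _ = i := by rw [hu, hb]; abel
  have heH : (∃ u : M, e = x + u) ∧ (∃ u : M, x = e + u) := ⟨⟨a, ha⟩, ⟨b, hb⟩⟩
  -- (1) → (2)
  have h12 : ((fun h => h + k) '' {i : M | (∃ u : M, i = x + u) ∧ (∃ u : M, x = i + u)}
      = {i : M | (∃ u : M, i = x + u) ∧ (∃ u : M, x = i + u)}) →
      (∃ i ∈ {i : M | (∃ u : M, i = x + u) ∧ (∃ u : M, x = i + u)}, ∃ u : M, i = k + u) := by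
    intro himg
    have hx : x ∈ {i : M | (∃ u : M, i = x + u) ∧ (∃ u : M, x = i + u)} :=
      ⟨⟨0, by simp⟩, ⟨0, by simp⟩⟩
    rw [← himg] at hx
    obtain ⟨h, hhH, hh⟩ := hx
    exact ⟨x, ⟨⟨0, by simp⟩, ⟨0, by simp⟩⟩, h, by rw [← hh]; abel⟩
  -- (2) → (3)
  have h23 : (∃ i ∈ {i : M | (∃ u : M, i = x + u) ∧ (∃ u : M, x = i + u)}, ∃ u : M, i = k + u) →
      (∀ i ∈ {i : M | (∃ u : M, i = x + u) ∧ (∃ u : M, x = i + u)}, ∃ u : M, i = k + u) := by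
    rintro ⟨i, ⟨⟨_, _⟩, v, hv⟩, u, hu⟩ j ⟨⟨w, hw⟩, _⟩
    exact ⟨u + v + w, by rw [hw, hv, hu]; abel⟩
  -- (3) → (1)
  have h31 : (∀ i ∈ {i : M | (∃ u : M, i = x + u) ∧ (∃ u : M, x = i + u)}, ∃ u : M, i = k + u) →
      ((fun h => h + k) '' {i : M | (∃ u : M, i = x + u) ∧ (∃ u : M, x = i + u)}
      = {i : M | (∃ u : M, i = x + u) ∧ (∃ u : M, x = i + u)}) := by
    intro hall
    obtain ⟨ue, hue⟩ := hall e heH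
    apply Set.Subset.antisymm
    · rintro _ ⟨h, ⟨⟨p, hp⟩, q, hq⟩, rfl⟩
      refine ⟨⟨p + k, by rw [hp]; abel⟩, ⟨ue + q, ?_⟩⟩
      calc x = h + q := hq
        _ = h + e + q := by rw [hid h p hp]
        _ = h + k + (ue + q) := by rw [hue]; abel
    · rintro i ⟨⟨u', hu'⟩, v', hv'⟩
      obtain ⟨w, hw⟩ := hall i ⟨⟨u', hu'⟩, v', hv'⟩
      have hhk : e + w + k = i := by
        calc e + w + k = i + e := by rw [hw]; abel
          _ = i := hid i u' hu'
      refine ⟨e + w, ⟨⟨a + w, by rw [ha]; abel⟩, ⟨k + v', ?_⟩⟩, hhk⟩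
      rw [hv', ← hhk]; abel
  exact ⟨⟨fun h1 => h12 h1, fun h2 => h31 (h23 h2)⟩,
    ⟨fun h1 => h23 (h12 h1), fun h3 => h31 h3⟩⟩
end

section
/- Let T = M ×_Φ^q S be a tight twisted product where M is a unipotent commutative monoid (its only idempotent is 0). Then every element of the submonoid of T generated by the idempotents of T, other than the identity (0,1), has its second coordinate in the subsemigroup of S generated by the non-identity idempotents of S. -/
/-- Membership in the submonoid of the twisted product generated by its idempotents. -/
inductive genT {M S : Type*} [AddCommMonoid M] [Monoid S] (Φ : S → S → ℕ) (q : M) :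
    M × S → Prop
  | one : genT Φ q ((0 : M), (1 : S))
  | mem (x : M × S) : tmul Φ q x x = x → genT Φ q x
  | mul (x y : M × S) : genT Φ q x → genT Φ q y → genT Φ q (tmul Φ q x y)

theorem stmt19 {M S : Type*} [AddCommMonoid M] [Monoid S] (Φ : S → S → ℕ)
    (hT1 : ∀ a b c : S, Φ a b + Φ (a * b) c = Φ a (b * c) + Φ b c)
    (hT2a : ∀ a b : S, ∃ a' : S, a * b = a' * b ∧ Φ a' b = 0)
    (hT2b : ∀ a b : S, ∃ b' : S, a * b = a * b' ∧ Φ a b' = 0)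
    (q : M)
    (huni : ∀ p : M, p + p = p → p = 0) :
    ∀ x : M × S, genT Φ q x → x ≠ ((0 : M), (1 : S)) →
      x.2 ∈ Subsemigroup.closure {e : S | e * e = e ∧ e ≠ 1} := by
  -- First: Φ 1 1 = 0
  have h11 : Φ 1 1 = 0 := by
    obtain ⟨a', h1, h2⟩ := hT2a 1 1
    simp only [mul_one, one_mul] at h1
    rwa [← h1] at h2
  -- Φ 1 c = 0 for all c
  have h1c : ∀ c : S, Φ 1 c = 0 := by
    intro c
    have := hT1 1 1 c
    simp only [one_mul, h11, zero_add] at this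
    omega
  -- Φ a 1 = 0 for all a
  have ha1 : ∀ a : S, Φ a 1 = 0 := by
    intro a
    have := hT1 a 1 1
    simp only [mul_one, h11, add_zero] at this
    omega
  have key : ∀ x : M × S, genT Φ q x → x = ((0 : M), (1 : S)) ∨
      x.2 ∈ Subsemigroup.closure {e : S | e * e = e ∧ e ≠ 1} := by
    intro x hx
    induction hx with
    | one => exact Or.inl rfl
    | mem x hidem =>
      have h2 : x.2 * x.2 = x.2 := congrArg Prod.snd hidem
      by_cases h1 : x.2 = 1
      · left
        have h1' : x.1 + x.1 + Φ x.2 x.2 • q = x.1 := congrArg Prod.fst hidem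
        rw [h1, h11, zero_smul, add_zero] at h1'
        have := huni x.1 h1'
        exact Prod.ext this h1
      · exact Or.inr (Subsemigroup.subset_closure ⟨h2, h1⟩)
    | mul x y hx hy ihx ihy =>
      rcases ihx with rfl | ihx
      · have : tmul Φ q ((0 : M), (1 : S)) y = y := by
          simp [tmul, h1c]
        rw [this]
        exact ihy
      rcases ihy with rfl | ihy
      · have : tmul Φ q x ((0 : M), (1 : S)) = x := by
          simp [tmul, ha1]
        rw [this]
        exact Or.inr ihx
      · exact Or.inr (Subsemigroup.mul_mem _ ihx ihy)
  intro x hx hne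
  rcases key x hx with rfl | h
  · exact absurd rfl hne
  · exact h
end
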